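/- arXiv:2410.05031 — 2 statements merged into one kernel-verified Lean document; each statement's English description precedes it below -/
import Mathlib

section
/- For all integers n ≥ 2 and all real x, the Baxter polynomials satisfy the differential-recurrence identity (n+3)(n+4)·ℬ_{n+1}(x) = ((10n²+25n+12)x + n²+4n)·ℬ_n(x) − 3x(5nx+4x−n−4)·ℬ_n'(x) + 6x²(x+1)·ℬ_n''(x). -/
/-!
With `θ = x d/dx` one has `x²ℬ'' = θ(θ - 1)ℬ`, so the right-hand side is
`x q₁(θ) ℬₙ + q₀(θ) ℬₙ` for two quadratics `q₀, q₁`. Comparing coefficients of `x^(k+1)` turns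
the identity into a three-term recurrence between `D (n+1) (k+1)`, `D n (k+1)` and `D n k`.
All three are products of the four consecutive binomial coefficients `C(n+1, k-1), …,
C(n+1, k+2)` (Pascal's rule for the `C(n+2, ·)` in `D (n+1) (k+1)`), whose successive ratios are
rational in `k`, and the recurrence becomes an identity of rational functions.
-/

open Finset

noncomputable def D (n k : ℕ) : ℝ :=
  if k = 0 then 0 else
    2 / (n * (n + 1) ^ 2) * (Nat.choose (n + 1) (k - 1)) *
      (Nat.choose (n + 1) k) * (Nat.choose (n + 1) (k + 1))

noncomputable def Bpoly (n : ℕ) (x : ℝ) : ℝ := ∑ k ∈ range (n + 1), D n k * x ^ k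

open Polynomial

theorem cast_succ_mul_choose_succ {R : Type*} [CommRing R] (m j : ℕ) :
    ((j : R) + 1) * (m.choose (j + 1) : R) = ((m : R) - j) * (m.choose j : R) := by
  rcases le_or_gt j m with hjm | hmj
  · have h := congrArg (Nat.cast (R := R)) (Nat.choose_succ_right_eq m j)
    push_cast [Nat.cast_sub hjm] at h
    linear_combination h
  · simp [Nat.choose_eq_zero_of_lt hmj, Nat.choose_eq_zero_of_lt (Nat.lt_succ_of_lt hmj)]

theorem baxter_coeff_identity {K : Type*} [Field K] {n k a b c d : K} (hn : n ≠ 0)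
    (hn1 : n + 1 ≠ 0) (hn2 : n + 2 ≠ 0) (hk1 : k + 1 ≠ 0) (hk2 : k + 2 ≠ 0)
    (hab : k * b = (n + 2 - k) * a) (hbc : (k + 1) * c = (n + 1 - k) * b)
    (hcd : (k + 2) * d = (n - k) * c) :
    (n + 3) * (n + 4) * (2 / ((n + 1) * (n + 2) ^ 2) * (a + b) * (b + c) * (c + d)) =
      (n ^ 2 + 4 * n + 3 * (n + 4) * (k + 1) + 6 * (k + 1) * k) *
          (2 / (n * (n + 1) ^ 2) * b * c * d) +
        (10 * n ^ 2 + 25 * n + 12 - (15 * n + 12) * k + 6 * k * (k - 1)) *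
          (2 / (n * (n + 1) ^ 2) * a * b * c) := by
  obtain rfl : d = (n - k) * c / (k + 2) := by field_simp; linear_combination hcd
  obtain rfl : c = (n + 1 - k) * b / (k + 1) := by field_simp; linear_combination hbc
  -- Once `c` and `d` are eliminated, the difference is linear in `a` and vanishes on the line
  -- `k * b = (n + 2 - k) * a`, hence is a multiple of that relation; the cubic cofactor is the
  -- quotient.
  rw [← sub_eq_zero]
  calc _ = 2 * (n + 1 - k) * b ^ 2 / (n * (n + 1) ^ 2 * (k + 1) ^ 2 * (k + 2)) *
        (n ^ 3 + 6 * n ^ 2 - 13 * n - 12 + (n ^ 2 - 26 * n - 6) * k + (12 - 9 * n) * k ^ 2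
          + 6 * k ^ 3) * ((n + 2 - k) * a - k * b) := by
        field_simp
        ring
    _ = 0 := by rw [hab, sub_self, mul_zero]

theorem D_succ (n k : ℕ) :
    D n (k + 1) = 2 / (n * (n + 1) ^ 2) * ((n + 1).choose k : ℝ) *
      ((n + 1).choose (k + 1) : ℝ) * ((n + 1).choose (k + 2) : ℝ) := by
  simp [D]

theorem D_eq_zero_of_lt {n k : ℕ} (h : n < k) : D n k = 0 := by
  simp [D, Nat.choose_eq_zero_of_lt (show n + 1 < k + 1 by omega)]

theorem D_recurrence {n : ℕ} (hn : n ≠ 0) (k : ℕ) :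
    ((n : ℝ) + 3) * ((n : ℝ) + 4) * D (n + 1) (k + 1) =
      ((n : ℝ) ^ 2 + 4 * n + 3 * (n + 4) * (k + 1) + 6 * (k + 1) * k) * D n (k + 1) +
        (10 * (n : ℝ) ^ 2 + 25 * n + 12 - (15 * n + 12) * k + 6 * k * (k - 1)) * D n k := by
  have hrel (j : ℕ) : ((j : ℝ) + 1) * ((n + 1).choose (j + 1) : ℝ) =
      ((n : ℝ) + 1 - j) * ((n + 1).choose j : ℝ) := by
    simpa using cast_succ_mul_choose_succ (R := ℝ) (n + 1) j
  -- `a` plays the role of `C(n+1, k-1)`, read as `0` when `k = 0`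
  obtain ⟨a, hDk, hpascal, hab⟩ : ∃ a : ℝ,
      D n k = 2 / (n * (n + 1) ^ 2) * a * (n + 1).choose k * (n + 1).choose (k + 1) ∧
      ((n + 1 + 1).choose k : ℝ) = a + (n + 1).choose k ∧
      (k : ℝ) * (n + 1).choose k = (n + 2 - k) * a := by
    cases k with
    | zero => exact ⟨0, by simp [D], by simp, by simp⟩
    | succ j =>
      refine ⟨(n + 1).choose j, D_succ n j, by simp [Nat.choose_succ_succ], ?_⟩
      push_cast
      linear_combination hrel j
  have hn₀ : (n : ℝ) ≠ 0 := Nat.cast_ne_zero.mpr hn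
  rw [hDk, D_succ, D_succ, hpascal, Nat.choose_succ_succ' (n + 1) k,
    Nat.choose_succ_succ' (n + 1) (k + 1)]
  push_cast
  have hcd : ((k : ℝ) + 2) * ((n + 1).choose (k + 2) : ℝ) =
      ((n : ℝ) - k) * ((n + 1).choose (k + 1) : ℝ) := by
    linear_combination (norm := (push_cast; ring)) hrel (k + 1)
  linear_combination baxter_coeff_identity hn₀ (by positivity) (by positivity) (by positivity)
    (by positivity) hab (hrel k) hcd

noncomputable def baxterPoly (n : ℕ) : ℝ[X] := ∑ k ∈ range (n + 1), C (D n k) * X ^ k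

theorem coeff_baxterPoly (n k : ℕ) : (baxterPoly n).coeff k = D n k := by
  simp only [baxterPoly, finsetSum_coeff, coeff_C_mul_X_pow, sum_ite_eq, mem_range]
  split_ifs with hk
  · rfl
  · exact (D_eq_zero_of_lt (by omega)).symm

theorem Bpoly_eq_eval (n : ℕ) : Bpoly n = fun x => (baxterPoly n).eval x := by
  ext x
  simp [Bpoly, baxterPoly, eval_finsetSum]

theorem deriv_Bpoly (n : ℕ) : deriv (Bpoly n) = fun x => (derivative (baxterPoly n)).eval x := by
  ext x
  simp [Bpoly_eq_eval]

theorem coeff_X_mul_derivative {R : Type*} [Semiring R] (p : R[X]) (k : ℕ) :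
    (X * derivative p).coeff k = p.coeff k * k := by
  cases k with
  | zero => simp
  | succ k => simp [coeff_X_mul, coeff_derivative]

theorem coeff_X_sq_mul_derivative_derivative {R : Type*} [CommRing R] (p : R[X]) (k : ℕ) :
    (X ^ 2 * derivative (derivative p)).coeff k = p.coeff k * (k * (k - 1)) := by
  match k with
  | 0 => simp
  | 1 => simp [coeff_X_pow_mul']
  | k + 2 =>
    simp [coeff_X_pow_mul', coeff_derivative]
    ring

theorem baxterPoly_recurrence {n : ℕ} (hn : n ≠ 0) :
    ((n : ℝ[X]) + 3) * ((n : ℝ[X]) + 4) * baxterPoly (n + 1) =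
      ((10 * (n : ℝ[X]) ^ 2 + 25 * (n : ℝ[X]) + 12) * X + (n : ℝ[X]) ^ 2 + 4 * (n : ℝ[X])) *
          baxterPoly n
        - 3 * X * (5 * (n : ℝ[X]) * X + 4 * X - (n : ℝ[X]) - 4) * derivative (baxterPoly n)
        + 6 * X ^ 2 * (X + 1) * derivative (derivative (baxterPoly n)) := by
  suffices h : C (((n : ℝ) + 3) * ((n : ℝ) + 4)) * baxterPoly (n + 1) =
      X * (C (10 * (n : ℝ) ^ 2 + 25 * n + 12) * baxterPoly n
          - C (15 * (n : ℝ) + 12) * (X * derivative (baxterPoly n))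
          + C 6 * (X ^ 2 * derivative (derivative (baxterPoly n))))
        + (C ((n : ℝ) ^ 2 + 4 * n) * baxterPoly n
          + C (3 * ((n : ℝ) + 4)) * (X * derivative (baxterPoly n))
          + C 6 * (X ^ 2 * derivative (derivative (baxterPoly n)))) by
    simp only [map_add, map_mul, map_pow, map_natCast, map_ofNat] at h
    linear_combination h
  ext k
  cases k with
  | zero => simp [coeff_baxterPoly, D]
  | succ k =>
    rw [coeff_add, coeff_X_mul]
    simp only [coeff_add, coeff_sub, coeff_C_mul, coeff_baxterPoly, coeff_X_mul_derivative,
      coeff_X_sq_mul_derivative_derivative]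
    push_cast
    linear_combination D_recurrence hn k

theorem baxter_diff_recurrence (n : ℕ) (hn : 2 ≤ n) (x : ℝ) :
    ((n : ℝ) + 3) * ((n : ℝ) + 4) * Bpoly (n + 1) x
      = ((10 * (n : ℝ) ^ 2 + 25 * n + 12) * x + (n : ℝ) ^ 2 + 4 * n) * Bpoly n x
        - 3 * x * (5 * (n : ℝ) * x + 4 * x - n - 4) * deriv (Bpoly n) x
        + 6 * x ^ 2 * (x + 1) * deriv (deriv (Bpoly n)) x := by
  rw [deriv_Bpoly, Bpoly_eq_eval, Bpoly_eq_eval]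
  simpa using congrArg (eval x) (baxterPoly_recurrence (n := n) (by omega))
end

section
/- The mean μ_n = ℬ_n'(1)/ℬ_n(1) satisfies μ_n / n → 1/2 as n → ∞; that is, the average number of rises in a uniformly random reduced Baxter permutation of length n is asymptotically n/2. -/
/-!
The coefficients `D n k` are symmetric under `k ↦ n + 1 - k`, because the three binomial
coefficients `C(n+1, k-1)`, `C(n+1, k)`, `C(n+1, k+1)` are permuted by it. Averaging `k` against
a weight distribution that is symmetric about `(n + 1) / 2` gives exactly `(n + 1) / 2`, so
`μ_n = (n + 1) / 2` and `μ_n / n → 1 / 2`.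
-/

open Finset

noncomputable def B (n : ℕ) : ℝ := if n = 0 then 1 else ∑ k ∈ Icc 1 n, D n k

noncomputable def g (n : ℕ) : ℝ := ∑ k ∈ range (n + 1), (k : ℝ) * D n k

open Filter

theorem two_mul_sum_mul_eq_of_reflect {R : Type*} [CommRing R] {f : ℕ → R} {N : ℕ}
    (hf : ∀ k ≤ N, f (N - k) = f k) :
    2 * ∑ k ∈ range (N + 1), (k : R) * f k = N * ∑ k ∈ range (N + 1), f k := by
  have hreflect : ∑ k ∈ range (N + 1), (k : R) * f k =
      ∑ k ∈ range (N + 1), ((N : R) - k) * f k := by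
    rw [← sum_range_reflect]
    refine sum_congr rfl fun k hk => ?_
    have hkN : k ≤ N := Nat.lt_succ_iff.mp (mem_range.mp hk)
    rw [Nat.add_sub_cancel, hf k hkN, Nat.cast_sub hkN]
  rw [two_mul]
  nth_rewrite 2 [hreflect]
  rw [← sum_add_distrib, mul_sum]
  exact sum_congr rfl fun k _ => by ring

theorem D_zero_right (n : ℕ) : D n 0 = 0 := if_pos rfl

theorem D_add_one_self (n : ℕ) : D n (n + 1) = 0 := by
  simp [D]

theorem D_reflect (n k : ℕ) (hk : k ≤ n + 1) : D n (n + 1 - k) = D n k := by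
  rcases Nat.eq_zero_or_pos k with rfl | hk0
  · rw [Nat.sub_zero, D_add_one_self, D_zero_right]
  rcases hk.eq_or_lt with rfl | hkn
  · rw [Nat.sub_self, D_add_one_self, D_zero_right]
  unfold D
  rw [if_neg (by omega), if_neg (by omega), show n + 1 - k - 1 = n + 1 - (k + 1) by omega,
    show n + 1 - k + 1 = n + 1 - (k - 1) by omega, Nat.choose_symm (by omega : k + 1 ≤ n + 1),
    Nat.choose_symm hk, Nat.choose_symm (by omega : k - 1 ≤ n + 1)]
  ring

theorem B_eq_sum_range {n : ℕ} (hn : n ≠ 0) : B n = ∑ k ∈ range (n + 2), D n k := by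
  rw [B, if_neg hn, sum_range_succ, D_add_one_self, add_zero, range_eq_Ico,
    sum_eq_sum_Ico_succ_bot (Nat.succ_pos n), D_zero_right, zero_add]
  rfl

theorem g_eq_sum_range (n : ℕ) : g n = ∑ k ∈ range (n + 2), (k : ℝ) * D n k := by
  rw [g, sum_range_succ _ (n + 1), D_add_one_self, mul_zero, add_zero]

theorem B_pos {n : ℕ} (hn : n ≠ 0) : 0 < B n := by
  rw [B, if_neg hn]
  refine sum_pos' (fun k _ => ?_) ⟨1, mem_Icc.mpr ⟨le_rfl, Nat.one_le_iff_ne_zero.mpr hn⟩, ?_⟩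
  · unfold D; split <;> positivity
  · have hn' : (0 : ℝ) < n := by positivity
    have h2 : 0 < Nat.choose (n + 1) 2 := Nat.choose_pos (by omega)
    simp only [D, one_ne_zero, if_false, Nat.sub_self, Nat.choose_zero_right, Nat.choose_one_right]
    positivity

theorem g_div_B {n : ℕ} (hn : n ≠ 0) : g n / B n = (n + 1) / 2 := by
  have hsum := two_mul_sum_mul_eq_of_reflect (R := ℝ) (N := n + 1) (D_reflect n)
  rw [← g_eq_sum_range, ← B_eq_sum_range hn, Nat.cast_succ] at hsum
  rw [div_eq_div_iff (B_pos hn).ne' two_ne_zero]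
  linarith

theorem baxter_mean_asymptotic :
    Filter.Tendsto (fun n : ℕ => g n / B n / n) Filter.atTop (nhds (1 / 2)) := by
  have hlim := tendsto_add_mul_div_add_mul_atTop_nhds (1 : ℝ) 0 1 two_ne_zero
  refine hlim.congr' ((eventually_ne_atTop 0).mono fun n hn => ?_)
  simp only [g_div_B hn]
  field_simp
  ring
end
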